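/- arXiv:1805.06656 — 2 statements merged into one kernel-verified Lean document; each statement's English description precedes it below -/
import Mathlib

section
/- Let α ∈ (0, 2π) and let g be the 2π-periodic odd function defined by g(t) = t for |t| ≤ π - α/2 and g linear on [π - α/2, π + α/2] with g(π - α/2) = π - α/2, g(π + α/2) = -(π - α/2). Let b_n = (1/π)∫_{-π}^{π} g(t) sin(nt) dt be its Fourier sine coefficients. Then |b_n| ≤ 8/(α n²) for all n ≥ 1. -/
open Real

lemma cont_affine_sin (a b : ℝ) (n : ℕ) :
    Continuous (fun t : ℝ => (a + b * t) * Real.sin (n * t)) :=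
  (continuous_const.add (continuous_const.mul continuous_id)).mul
    (Real.continuous_sin.comp (continuous_const.mul continuous_id))

lemma integral_affine_sin (a b : ℝ) {n : ℕ} (hn : 1 ≤ n) (x y : ℝ) :
    ∫ t in x..y, (a + b * t) * Real.sin (n * t) =
      (-(a + b * y) * Real.cos (n * y) / n + b * Real.sin (n * y) / n ^ 2) -
      (-(a + b * x) * Real.cos (n * x) / n + b * Real.sin (n * x) / n ^ 2) := by
  have hn0 : (n : ℝ) ≠ 0 := by exact_mod_cast (Nat.one_le_iff_ne_zero.mp hn)
  apply intervalIntegral.integral_eq_sub_of_hasDerivAt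
  · intro t _
    have hcos : HasDerivAt (fun t : ℝ => Real.cos ((n : ℝ) * t))
        (-(n : ℝ) * Real.sin ((n : ℝ) * t)) t := by
      have := (Real.hasDerivAt_cos ((n : ℝ) * t)).comp t ((hasDerivAt_id t).const_mul (n : ℝ))
      simpa [Function.comp_def, mul_comm] using this
    have hsin : HasDerivAt (fun t : ℝ => Real.sin ((n : ℝ) * t))
        ((n : ℝ) * Real.cos ((n : ℝ) * t)) t := by
      have := (Real.hasDerivAt_sin ((n : ℝ) * t)).comp t ((hasDerivAt_id t).const_mul (n : ℝ))
      simpa [Function.comp_def, mul_comm] using this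
    have haff : HasDerivAt (fun t : ℝ => -(a + b * t)) (-b) t := by
      have h0 := (((hasDerivAt_id t).const_mul b).const_add a).neg
      rw [mul_one] at h0
      exact h0
    have h1 : HasDerivAt (fun t : ℝ => -(a + b * t) * Real.cos ((n : ℝ) * t) / n)
        ((-b * Real.cos ((n : ℝ) * t) + -(a + b * t) * (-(n : ℝ) * Real.sin ((n : ℝ) * t))) / n) t :=
      (haff.mul hcos).div_const n
    have h2 : HasDerivAt (fun t : ℝ => b * Real.sin ((n : ℝ) * t) / n ^ 2)
        (b * ((n : ℝ) * Real.cos ((n : ℝ) * t)) / n ^ 2) t :=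
      (hsin.const_mul b).div_const (n ^ 2)
    have := h1.add h2
    convert this using 1
    · rfl
    rw [div_add_div _ _ hn0 (pow_ne_zero 2 hn0), eq_div_iff (mul_ne_zero hn0 (pow_ne_zero 2 hn0))]
    ring
  · exact (cont_affine_sin a b n).intervalIntegrable x y

theorem glued_odd_function_sine_coefficients_bound (α : ℝ) (hα : 0 < α) (hα2 : α < 2 * π) :
    let g : ℝ → ℝ := fun t =>
      if |t| ≤ π - α / 2 then t
      else if 0 < t then (π - α / 2) - ((2 * π - α) / α) * (t - (π - α / 2))
      else -((π - α / 2) - ((2 * π - α) / α) * (-t - (π - α / 2)))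
    ∀ n : ℕ, 1 ≤ n →
      |(1 / π) * ∫ t in (-π)..π, g t * Real.sin (n * t)| ≤ 8 / (α * n ^ 2) := by
  intro g n hn
  have hn0 : (n : ℝ) ≠ 0 := by exact_mod_cast (Nat.one_le_iff_ne_zero.mp hn)
  set c : ℝ := π - α / 2 with hc
  set s : ℝ := (2 * π - α) / α with hs
  have hc0 : 0 < c := by simp only [hc]; linarith
  have hcπ : c < π := by simp only [hc]; linarith
  -- EqOn facts
  have e2 : Set.EqOn (fun t => g t * Real.sin (n * t))
      (fun t => (0 + 1 * t) * Real.sin (n * t)) (Set.uIcc (-c) c) := by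
    intro t ht
    rw [Set.uIcc_of_le (by linarith)] at ht
    have : |t| ≤ c := abs_le.mpr ⟨ht.1, ht.2⟩
    simp only [g, ← hc, this, if_pos]
    ring_nf
  have e3 : Set.EqOn (fun t => g t * Real.sin (n * t))
      (fun t => (c * (1 + s) + (-s) * t) * Real.sin (n * t)) (Set.uIcc c π) := by
    intro t ht
    rw [Set.uIcc_of_le hcπ.le] at ht
    simp only [g, ← hc, ← hs]
    by_cases habs : |t| ≤ c
    · have htc : t = c := le_antisymm ((le_abs_self t).trans habs) ht.1
      rw [if_pos habs, htc]; ring_nf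
    · have ht0 : 0 < t := lt_of_lt_of_le hc0 ht.1
      rw [if_neg habs, if_pos ht0]; ring_nf
  have e1 : Set.EqOn (fun t => g t * Real.sin (n * t))
      (fun t => (-(c * (1 + s)) + (-s) * t) * Real.sin (n * t)) (Set.uIcc (-π) (-c)) := by
    intro t ht
    rw [Set.uIcc_of_le (by linarith)] at ht
    simp only [g, ← hc, ← hs]
    by_cases habs : |t| ≤ c
    · have htc : t = -c := le_antisymm ht.2 (by
        have := (neg_abs_le t); linarith [neg_le_neg habs])
      rw [if_pos habs, htc]; ring_nf
    · have ht0 : ¬ (0 < t) := by push_neg; linarith [ht.2, hc0]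
      rw [if_neg habs, if_neg ht0]; ring_nf
  -- integrability
  have i1 : IntervalIntegrable (fun t => g t * Real.sin (n * t)) MeasureTheory.volume (-π) (-c) := by
    refine ((cont_affine_sin (-(c * (1 + s))) (-s) n).intervalIntegrable (-π) (-c)).congr ?_
    exact fun t ht => (e1 (Set.uIoc_subset_uIcc ht)).symm
  have i2 : IntervalIntegrable (fun t => g t * Real.sin (n * t)) MeasureTheory.volume (-c) c := by
    refine ((cont_affine_sin 0 1 n).intervalIntegrable (-c) c).congr ?_
    exact fun t ht => (e2 (Set.uIoc_subset_uIcc ht)).symm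
  have i3 : IntervalIntegrable (fun t => g t * Real.sin (n * t)) MeasureTheory.volume c π := by
    refine ((cont_affine_sin (c * (1 + s)) (-s) n).intervalIntegrable c π).congr ?_
    exact fun t ht => (e3 (Set.uIoc_subset_uIcc ht)).symm
  -- split the integral
  have hsplit : (∫ t in (-π)..π, g t * Real.sin (n * t)) =
      (∫ t in (-π)..(-c), g t * Real.sin (n * t)) +
      (∫ t in (-c)..c, g t * Real.sin (n * t)) +
      (∫ t in c..π, g t * Real.sin (n * t)) := by
    rw [← intervalIntegral.integral_add_adjacent_intervals (i1.trans i2) i3,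
        ← intervalIntegral.integral_add_adjacent_intervals i1 i2]
  have v1 : (∫ t in (-π)..(-c), g t * Real.sin (n * t)) =
      ∫ t in (-π)..(-c), (-(c * (1 + s)) + (-s) * t) * Real.sin (n * t) :=
    intervalIntegral.integral_congr e1
  have v2 : (∫ t in (-c)..c, g t * Real.sin (n * t)) =
      ∫ t in (-c)..c, (0 + 1 * t) * Real.sin (n * t) :=
    intervalIntegral.integral_congr e2
  have v3 : (∫ t in c..π, g t * Real.sin (n * t)) =
      ∫ t in c..π, (c * (1 + s) + (-s) * t) * Real.sin (n * t) :=
    intervalIntegral.integral_congr e3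
  have hcs : c * (1 + s) + (-s) * π = 0 := by
    simp only [hc, hs]; field_simp; ring
  have hsinπ : Real.sin ((n : ℝ) * π) = 0 := Real.sin_nat_mul_pi n
  have hE : (∫ t in (-π)..π, g t * Real.sin (n * t)) = 4 * π * Real.sin (n * c) / (α * n ^ 2) := by
    rw [hsplit, v1, v2, v3,
      integral_affine_sin (-(c * (1 + s))) (-s) hn (-π) (-c),
      integral_affine_sin 0 1 hn (-c) c,
      integral_affine_sin (c * (1 + s)) (-s) hn c π]
    have h1 : (n : ℝ) * -π = -((n : ℝ) * π) := by ring
    have h2 : (n : ℝ) * -c = -((n : ℝ) * c) := by ring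
    rw [h1, h2, Real.cos_neg, Real.cos_neg, Real.sin_neg, Real.sin_neg, hsinπ]
    have hcs' : c * (1 + s) = s * π := by linarith
    rw [hcs']
    have : s = (2 * π - α) / α := hs
    rw [this]
    field_simp
    ring
  rw [hE]
  have hπ : (0:ℝ) < π := Real.pi_pos
  have hden : (0:ℝ) < α * (n:ℝ) ^ 2 := by positivity
  have heq : (1 / π) * (4 * π * Real.sin ((n:ℝ) * c) / (α * (n:ℝ) ^ 2)) =
      4 * Real.sin ((n:ℝ) * c) / (α * (n:ℝ) ^ 2) := by
    field_simp
  rw [heq, abs_div, abs_of_pos hden, abs_mul, abs_of_pos (by norm_num : (0:ℝ) < 4)]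
  rw [div_le_div_iff₀ hden hden]
  nlinarith [Real.abs_sin_le_one ((n:ℝ) * c), abs_nonneg (Real.sin ((n:ℝ) * c)), hden.le]
end

section
/- For all x ∈ (0, 2π), the series -2 Σ_{n=1}^∞ sin(nx)/n converges to x - π (pointwise convergence of the Fourier series of the sawtooth function at its points of continuity). -/
/-!
For `‖w‖ ≤ 1`, `w ≠ 1`, the partial sums of `∑ wⁿ/n` are bounded by Dirichlet's test (the
geometric sums `∑ wⁿ` are bounded by `2 / ‖1 - w‖`), and Abel's limit theorem identifies the
limit with `-log (1 - w)`, the value of the power series inside the disc. For `w = e^{ix}` the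
imaginary part is `-arg (1 - e^{ix})`, and `1 - e^{ix} = 2 sin (x/2) e^{i(x - π)/2}` with
`sin (x/2) > 0` gives `arg (1 - e^{ix}) = (x - π)/2`.
-/

open Real Filter Finset Topology

theorem norm_geom_sum_le_two_div {𝕜 : Type*} [NormedDivisionRing 𝕜] {w : 𝕜} (hw : ‖w‖ ≤ 1)
    (hw1 : w ≠ 1) (n : ℕ) : ‖∑ i ∈ range n, w ^ i‖ ≤ 2 / ‖1 - w‖ := by
  rw [geom_sum_eq hw1, norm_div, ← norm_neg (w - 1), neg_sub]
  gcongr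
  calc ‖w ^ n - 1‖ ≤ ‖w ^ n‖ + ‖(1 : 𝕜)‖ := norm_sub_le _ _
    _ ≤ 2 := by rw [norm_pow, norm_one]; linarith [pow_le_one₀ (norm_nonneg w) hw (n := n)]

namespace Complex

theorem one_sub_mem_slitPlane {w : ℂ} (hw : ‖w‖ ≤ 1) (hw1 : w ≠ 1) : 1 - w ∈ slitPlane := by
  rw [mem_slitPlane_iff, sub_re, one_re, sub_im, one_im, zero_sub, neg_ne_zero, sub_pos]
  by_cases him : w.im = 0
  · left
    have hre : w.re ≠ 1 := fun h => hw1 (Complex.ext (by simpa using h) (by simpa using him))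
    exact lt_of_le_of_ne ((re_le_norm w).trans hw) hre
  · exact Or.inr him

theorem cauchySeq_sum_range_pow_succ_div {w : ℂ} (hw : ‖w‖ ≤ 1) (hw1 : w ≠ 1) :
    CauchySeq fun N => ∑ n ∈ range N, w ^ (n + 1) / (n + 1) := by
  have hbound (N : ℕ) : ‖∑ n ∈ range N, w ^ (n + 1)‖ ≤ 2 / ‖1 - w‖ := by
    simp_rw [pow_succ, ← sum_mul, norm_mul]
    exact (mul_le_of_le_one_right (norm_nonneg _) hw).trans (norm_geom_sum_le_two_div hw hw1 N)
  have hanti : Antitone fun n : ℕ => ((n : ℝ) + 1)⁻¹ := fun a b hab =>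
    inv_anti₀ (by positivity) (by exact_mod_cast Nat.add_le_add_right hab 1)
  have hzero : Tendsto (fun n : ℕ => ((n : ℝ) + 1)⁻¹) atTop (𝓝 0) := by
    simpa only [one_div] using tendsto_one_div_add_atTop_nhds_zero_nat (𝕜 := ℝ)
  convert hanti.cauchySeq_series_mul_of_tendsto_zero_of_bounded hzero hbound using 3 with N n
  simp [div_eq_inv_mul]

theorem tendsto_sum_range_pow_succ_div_neg_log {w : ℂ} (hw : ‖w‖ ≤ 1) (hw1 : w ≠ 1) :
    Tendsto (fun N => ∑ n ∈ range N, w ^ (n + 1) / (n + 1)) atTop (𝓝 (-log (1 - w))) := by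
  obtain ⟨l, hl⟩ := cauchySeq_tendsto_of_complete (cauchySeq_sum_range_pow_succ_div hw hw1)
  -- Abel's theorem is about `∑ (w ^ n / n) z ^ n`, whose `n = 0` coefficient is `0 / 0 = 0`.
  have hl' : Tendsto (fun N => ∑ n ∈ range N, w ^ n / n) atTop (𝓝 l) := by
    rw [← tendsto_add_atTop_iff_nat 1]
    simpa [sum_range_succ'] using hl
  have habel := tendsto_tsum_powerSeries_nhdsWithin_lt hl'
  rw [tendsto_map'_iff] at habel
  have hseries : ∀ᶠ r : ℝ in 𝓝[<] 1,
      (∑' n : ℕ, w ^ n / n * (r : ℂ) ^ n) = -log (1 - r * w) := by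
    filter_upwards [Ioo_mem_nhdsLT (by norm_num : (-1 : ℝ) < 1)] with r hr
    have hrw : ‖(r : ℂ) * w‖ < 1 := by
      rw [norm_mul, norm_real, Real.norm_eq_abs]
      exact mul_lt_one_of_nonneg_of_lt_one_left (abs_nonneg r) (abs_lt.2 hr) hw
    rw [← (hasSum_taylorSeries_neg_log hrw).tsum_eq]
    exact tsum_congr fun n => by ring
  have hlog : Tendsto (fun r : ℝ => -log (1 - r * w)) (𝓝[<] 1) (𝓝 (-log (1 - w))) := by
    have hcont : ContinuousAt (fun r : ℝ => -log (1 - r * w)) 1 :=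
      ((continuousAt_clog (by simpa using one_sub_mem_slitPlane hw hw1)).comp
        (by fun_prop)).neg
    simpa using hcont.tendsto.mono_left nhdsWithin_le_nhds
  rwa [tendsto_nhds_unique (habel.congr' hseries) hlog] at hl

theorem one_sub_exp_mul_I (x : ℝ) :
    1 - exp (x * I) = (2 * Real.sin (x / 2) : ℝ) * exp (((x - π) / 2 : ℝ) * I) := by
  have hsq : exp (x * I) = exp (x / 2 * I) ^ 2 := by rw [← exp_nat_mul]; ring_nf
  have hshift : exp (((x - π) / 2 : ℝ) * I) = exp (x / 2 * I) * -I := by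
    rw [show (((x - π) / 2 : ℝ) : ℂ) * I = x / 2 * I - π / 2 * I by push_cast; ring,
      exp_sub, exp_pi_div_two_mul_I, div_I, mul_neg]
  have h0 := exp_ne_zero (x / 2 * I)
  rw [hsq, hshift, ofReal_mul, ofReal_sin, Complex.sin, neg_mul, exp_neg]
  push_cast
  field_simp
  ring_nf
  rw [I_sq]
  ring

theorem exp_mul_I_ne_one {x : ℝ} (hx : x ∈ Set.Ioo 0 (2 * π)) : exp (x * I) ≠ 1 := by
  have hsin : Real.sin (x / 2) ≠ 0 :=
    (Real.sin_pos_of_pos_of_lt_pi (by linarith [hx.1]) (by linarith [hx.2])).ne'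
  intro h
  simpa [h, ← ofReal_sin, hsin, exp_ne_zero] using one_sub_exp_mul_I x

theorem arg_one_sub_exp_mul_I {x : ℝ} (hx : x ∈ Set.Ioo 0 (2 * π)) :
    arg (1 - exp (x * I)) = (x - π) / 2 := by
  have hsin : 0 < Real.sin (x / 2) :=
    Real.sin_pos_of_pos_of_lt_pi (by linarith [hx.1]) (by linarith [hx.2])
  rw [one_sub_exp_mul_I, arg_real_mul _ (by positivity), exp_mul_I,
    arg_cos_add_sin_mul_I ⟨by linarith [hx.1, pi_pos], by linarith [hx.2, pi_pos]⟩]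

end Complex

namespace Real

theorem tendsto_sum_range_sin_mul_div {x : ℝ} (hx : x ∈ Set.Ioo 0 (2 * π)) :
    Tendsto (fun N : ℕ => ∑ n ∈ range N, sin ((n + 1) * x) / (n + 1)) atTop
      (𝓝 ((π - x) / 2)) := by
  have hw : ‖Complex.exp (x * Complex.I)‖ = 1 := Complex.norm_exp_ofReal_mul_I x
  have hlim := (Complex.continuous_im.tendsto _).comp
    (Complex.tendsto_sum_range_pow_succ_div_neg_log hw.le (Complex.exp_mul_I_ne_one hx))
  have hterm (n : ℕ) : (Complex.exp (x * Complex.I) ^ (n + 1) / (n + 1)).im =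
      sin ((n + 1) * x) / (n + 1) := by
    have hcast : ((n + 1 : ℕ) : ℂ) * x = ((((n : ℝ) + 1) * x : ℝ) : ℂ) := by push_cast; ring
    have hden : (n : ℂ) + 1 = (((n : ℝ) + 1 : ℝ) : ℂ) := by push_cast; ring
    rw [← Complex.exp_nat_mul, ← mul_assoc, hcast, hden, Complex.div_ofReal_im,
      Complex.exp_ofReal_mul_I_im]
  rw [Complex.neg_im, Complex.log_im, Complex.arg_one_sub_exp_mul_I hx] at hlim
  convert hlim using 2 with N
  · simp [Complex.im_sum, hterm]
  · ring

end Real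

theorem sawtooth_fourier_series_pointwise (x : ℝ) (hx : x ∈ Set.Ioo 0 (2 * π)) :
    Filter.Tendsto
      (fun N : ℕ => -2 * ∑ n ∈ Finset.range N, Real.sin ((n + 1) * x) / (n + 1))
      Filter.atTop (nhds (x - π)) := by
  convert (Real.tendsto_sum_range_sin_mul_div hx).const_mul (-2) using 2
  ring
end
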